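/- Let N ≥ 1, let S ⊆ ℝ^N be compact, let h ∈ B_S, let D_1, …, D_M ⊆ ℝ^N be measurable sets, and let ω_1, …, ω_M ∈ (0,1] with ω_1 + ⋯ + ω_M = 1. Let μ > 0 and 0 < τ < 2/(1 + 2μ). Define \hat{T}_h f = Σ_{m=1}^M ω_m P_S((1 − μτ) f + τ χ_{D_m}(h − f)). Then \hat{T}_h is a Banach contraction on B_S with Lipschitz constant 1 − μτ; consequently \hat{T}_h has a unique fixed point \hat{f}* ∈ B_S, and for every starting point f_0 ∈ B_S the iterates f_{k+1} = \hat{T}_h f_k converge strongly to \hat{f}*. -/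

import Mathlib

/-!
The data term `τ χ_{D_m} h` cancels in `T̂_h f - T̂_h g`, which is therefore the average over `m`
of `P_S` applied to `(1 - μτ)(f - g) - τ χ_{D_m}(f - g)`. Pointwise this multiplies `f - g` by
`1 - μτ` off `D_m` and by `1 - μτ - τ` on `D_m`, and `τ (1 + 2μ) < 2` gives
`|1 - μτ - τ| ≤ 1 - μτ`. Since `P_S` is norm non-increasing and the weights are convex,
`T̂_h` is a `(1 - μτ)`-contraction of the closed subspace `B_S`, and Banach's fixed point
theorem applies.
-/

open MeasureTheory FourierTransform Filter

noncomputable section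

/-- The Hilbert space `L²(ℝᴺ; ℂ)` of square-integrable functions on `ℝᴺ`. -/
abbrev L2Space (N : ℕ) : Type :=
  Lp ℂ 2 (volume : Measure (EuclideanSpace ℝ (Fin N)))

/-- `f ∈ L²(ℝᴺ)` is bandlimited to `S`: its Fourier transform vanishes (a.e.) outside `S`;
equivalently, `f` agrees a.e. with the inverse Fourier transform of an integrable function `F`
vanishing outside `S`. -/
def IsBandlimited {N : ℕ} (S : Set (EuclideanSpace ℝ (Fin N))) (f : L2Space N) : Prop :=
  ∃ F : EuclideanSpace ℝ (Fin N) → ℂ,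
    Integrable F ∧ (∀ k, k ∉ S → F k = 0) ∧
      (f : EuclideanSpace ℝ (Fin N) → ℂ) =ᵐ[volume] 𝓕⁻ F

/-- Multiplication of `f ∈ L²` by the indicator function `χ_D`, as an element of `L²`. -/
def chiMul {N : ℕ} {D : Set (EuclideanSpace ℝ (Fin N))} (hD : MeasurableSet D)
    (f : L2Space N) : L2Space N :=
  ((Lp.memLp f).indicator hD).toLp (D.indicator f)

/-- The orthogonal projection of `L²(ℝᴺ)` onto a closed subspace `K`. -/
def projOf {N : ℕ} (K : Submodule ℂ (L2Space N)) (hK : IsClosed (K : Set (L2Space N))) :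
    L2Space N → L2Space N :=
  haveI : CompleteSpace K := hK.completeSpace_coe
  fun f => (K.orthogonalProjectionOnto f : L2Space N)

/-- The operator `T_h^{(D)} f = P_S (f + χ_D (h − f))` (single region). -/
def Tsingle {N : ℕ} (K : Submodule ℂ (L2Space N)) (hK : IsClosed (K : Set (L2Space N)))
    {D : Set (EuclideanSpace ℝ (Fin N))} (hD : MeasurableSet D)
    (h f : L2Space N) : L2Space N :=
  projOf K hK (f + chiMul hD (h - f))

/-- The regularized operator `T̂_h f = ∑ m, ω m • P_S ((1 − μτ) f + τ χ_{D m} (h − f))`. -/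
def TmultiReg {N : ℕ} (K : Submodule ℂ (L2Space N)) (hK : IsClosed (K : Set (L2Space N)))
    {M : ℕ} {D : Fin M → Set (EuclideanSpace ℝ (Fin N))} (hD : ∀ m, MeasurableSet (D m))
    (ω : Fin M → ℝ) (μ τ : ℝ) (h f : L2Space N) : L2Space N :=
  ∑ m, ω m • projOf K hK ((1 - μ * τ) • f + τ • chiMul (hD m) (h - f))

open Set Function

section ChiMul

variable {N : ℕ} {D : Set (EuclideanSpace ℝ (Fin N))} (hD : MeasurableSet D)

lemma coeFn_chiMul (f : L2Space N) : chiMul hD f =ᵐ[volume] D.indicator f :=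
  MemLp.coeFn_toLp _

lemma chiMul_sub (u v : L2Space N) : chiMul hD (u - v) = chiMul hD u - chiMul hD v := by
  have hind : D.indicator ⇑(u - v) =ᵐ[volume] D.indicator u - D.indicator v := by
    filter_upwards [Lp.coeFn_sub u v] with x hx
    by_cases hxD : x ∈ D
    · rw [Pi.sub_apply, indicator_of_mem hxD, indicator_of_mem hxD, indicator_of_mem hxD, hx,
        Pi.sub_apply]
    · rw [Pi.sub_apply, indicator_of_notMem hxD, indicator_of_notMem hxD, indicator_of_notMem hxD,
        sub_zero]
  rw [chiMul, chiMul, chiMul, ← MemLp.toLp_sub]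
  exact MemLp.toLp_congr _ _ hind

lemma norm_smul_sub_smul_chiMul_le {a t : ℝ} (ht : 0 ≤ t) (hta : t ≤ 2 * a) (v : L2Space N) :
    ‖a • v - t • chiMul hD v‖ ≤ a * ‖v‖ := by
  have ha : 0 ≤ a := by linarith
  calc ‖a • v - t • chiMul hD v‖ ≤ ‖a • v‖ := by
        refine Lp.norm_le_norm_of_ae_le ?_
        filter_upwards [Lp.coeFn_sub (a • v) (t • chiMul hD v), Lp.coeFn_smul a v,
          Lp.coeFn_smul t (chiMul hD v), coeFn_chiMul hD v] with x hsub hav htv hchi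
        rw [hsub, Pi.sub_apply, hav, htv, Pi.smul_apply, Pi.smul_apply, hchi]
        by_cases hx : x ∈ D
        · rw [indicator_of_mem hx, ← sub_smul, norm_smul, norm_smul]
          gcongr
          rw [Real.norm_eq_abs, Real.norm_eq_abs, abs_of_nonneg ha, abs_le]
          constructor <;> linarith
        · rw [indicator_of_notMem hx, smul_zero, sub_zero]
    _ = a * ‖v‖ := by rw [norm_smul, Real.norm_of_nonneg ha]

end ChiMul

lemma projOf_eq_starProjection {N : ℕ} (K : Submodule ℂ (L2Space N))
    (hK : IsClosed (K : Set (L2Space N))) [CompleteSpace K] :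
    projOf K hK = K.starProjection :=
  rfl

section TmultiReg

variable {N : ℕ} (K : Submodule ℂ (L2Space N)) (hK : IsClosed (K : Set (L2Space N)))
  {M : ℕ} {D : Fin M → Set (EuclideanSpace ℝ (Fin N))} (hD : ∀ m, MeasurableSet (D m))
  (ω : Fin M → ℝ) (μ τ : ℝ) (h : L2Space N)

lemma TmultiReg_mem (f : L2Space N) : TmultiReg K hK hD ω μ τ h f ∈ K := by
  have := hK.completeSpace_coe
  exact K.sum_mem fun m _ ↦ K.smul_of_tower_mem _ (by
    rw [projOf_eq_starProjection]; exact K.starProjection_apply_mem _)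

lemma TmultiReg_sub (f g : L2Space N) :
    TmultiReg K hK hD ω μ τ h f - TmultiReg K hK hD ω μ τ h g =
      ∑ m, ω m • projOf K hK ((1 - μ * τ) • (f - g) - τ • chiMul (hD m) (f - g)) := by
  have := hK.completeSpace_coe
  rw [TmultiReg, TmultiReg, ← Finset.sum_sub_distrib]
  refine Finset.sum_congr rfl fun m _ ↦ ?_
  rw [← smul_sub, projOf_eq_starProjection, ← map_sub, chiMul_sub, chiMul_sub, chiMul_sub]
  congr 2
  module

lemma norm_TmultiReg_sub_le (hω : ∀ m, 0 ≤ ω m) (hωsum : ∑ m, ω m = 1) (hτ0 : 0 ≤ τ)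
    (hτ : τ ≤ 2 * (1 - μ * τ)) (f g : L2Space N) :
    ‖TmultiReg K hK hD ω μ τ h f - TmultiReg K hK hD ω μ τ h g‖ ≤ (1 - μ * τ) * ‖f - g‖ := by
  have := hK.completeSpace_coe
  rw [TmultiReg_sub]
  calc _ ≤ ∑ m, ‖ω m • projOf K hK ((1 - μ * τ) • (f - g) - τ • chiMul (hD m) (f - g))‖ :=
        norm_sum_le _ _
    _ ≤ ∑ m, ω m * ((1 - μ * τ) * ‖f - g‖) := by
        refine Finset.sum_le_sum fun m _ ↦ ?_
        rw [norm_smul, Real.norm_of_nonneg (hω m), projOf_eq_starProjection]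
        exact mul_le_mul_of_nonneg_left ((K.norm_starProjection_apply_le _).trans
          (norm_smul_sub_smul_chiMul_le (hD m) hτ0 hτ _)) (hω m)
    _ = (1 - μ * τ) * ‖f - g‖ := by rw [← Finset.sum_mul, hωsum, one_mul]

end TmultiReg

theorem exists_unique_fixedPoint_tendsto_iterate {α : Type*} [MetricSpace α] {s : Set α}
    (hsc : IsComplete s) (hne : s.Nonempty) {T : α → α} (hsT : MapsTo T s s) {c : ℝ} (hc : c < 1)
    (hT : ∀ x ∈ s, ∀ y ∈ s, dist (T x) (T y) ≤ c * dist x y) :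
    ∃ y ∈ s, IsFixedPt T y ∧ (∀ z ∈ s, IsFixedPt T z → z = y) ∧
      ∀ x ∈ s, Tendsto (fun n ↦ T^[n] x) atTop (nhds y) := by
  have hcontr : ContractingWith c.toNNReal (hsT.restrict T s s) := by
    refine ⟨Real.toNNReal_lt_one.2 hc, LipschitzWith.of_dist_le_mul fun x y ↦ ?_⟩
    exact (hT x x.2 y y.2).trans (mul_le_mul_of_nonneg_right (Real.le_coe_toNNReal c) dist_nonneg)
  have huniq : ∀ y ∈ s, IsFixedPt T y → ∀ z ∈ s, IsFixedPt T z → z = y := by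
    intro y hy hTy z hz hTz
    have hle := hT z hz y hy
    rw [hTz.eq, hTy.eq] at hle
    exact dist_le_zero.1 (by nlinarith [dist_nonneg (x := z) (y := y)])
  obtain ⟨x₀, hx₀⟩ := hne
  obtain ⟨y, hy, hTy, -⟩ := hcontr.exists_fixedPoint' hsc hsT hx₀ (edist_ne_top _ _)
  refine ⟨y, hy, hTy, huniq y hy hTy, fun x hx ↦ ?_⟩
  obtain ⟨y', hy', hTy', hlim, -⟩ := hcontr.exists_fixedPoint' hsc hsT hx (edist_ne_top _ _)
  rwa [huniq y hy hTy y' hy' hTy'] at hlim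

lemma eq_iterate_of_succ {α : Type*} {T : α → α} {f : ℕ → α} (hf : ∀ k, f (k + 1) = T (f k)) :
    f = fun k ↦ T^[k] (f 0) := by
  funext k
  induction k with
  | zero => rfl
  | succ k ih => rw [hf k, ih, iterate_succ_apply']

theorem regularized_contraction_multi_general (N : ℕ)
    (S : Set (EuclideanSpace ℝ (Fin N)))
    (K : Submodule ℂ (L2Space N))
    (hKset : (K : Set (L2Space N)) = {f : L2Space N | IsBandlimited S f})
    (hK : IsClosed (K : Set (L2Space N)))
    (h : L2Space N)
    (M : ℕ) (D : Fin M → Set (EuclideanSpace ℝ (Fin N))) (hD : ∀ m, MeasurableSet (D m))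
    (ω : Fin M → ℝ) (hω : ∀ m, ω m ∈ Set.Ioc (0 : ℝ) 1) (hωsum : ∑ m, ω m = 1)
    (μ τ : ℝ) (hμ : 0 < μ) (hτ0 : 0 < τ) (hτ : τ < 2 / (1 + 2 * μ)) :
    (∀ f g : L2Space N, IsBandlimited S f → IsBandlimited S g →
        ‖TmultiReg K hK hD ω μ τ h f - TmultiReg K hK hD ω μ τ h g‖ ≤
          (1 - μ * τ) * ‖f - g‖) ∧
      ∃ fstar : L2Space N, IsBandlimited S fstar ∧
        TmultiReg K hK hD ω μ τ h fstar = fstar ∧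
        (∀ g : L2Space N, IsBandlimited S g → TmultiReg K hK hD ω μ τ h g = g → g = fstar) ∧
        ∀ f : ℕ → L2Space N, IsBandlimited S (f 0) →
          (∀ k : ℕ, f (k + 1) = TmultiReg K hK hD ω μ τ h (f k)) →
            Tendsto f atTop (nhds fstar) := by
  have hBK : ∀ f, IsBandlimited S f ↔ f ∈ K := fun f ↦ by rw [← SetLike.mem_coe, hKset]; rfl
  have hτ' : τ ≤ 2 * (1 - μ * τ) := by
    have := (lt_div_iff₀ (by positivity : (0 : ℝ) < 1 + 2 * μ)).1 hτ
    linarith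
  have hlip := norm_TmultiReg_sub_le K hK hD ω μ τ h (fun m ↦ (hω m).1.le) hωsum hτ0.le hτ'
  obtain ⟨fstar, hmem, hfix, huniq, hconv⟩ :=
    exists_unique_fixedPoint_tendsto_iterate (s := K) hK.isComplete ⟨0, K.zero_mem⟩
      (fun f _ ↦ TmultiReg_mem K hK hD ω μ τ h f) (by nlinarith [mul_pos hμ hτ0] : 1 - μ * τ < 1)
      (fun f _ g _ ↦ by simpa only [dist_eq_norm] using hlip f g)
  simp only [hBK]
  refine ⟨fun f g _ _ ↦ hlip f g, fstar, hmem, hfix, huniq, fun f hf0 hrec ↦ ?_⟩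
  rw [eq_iterate_of_succ hrec]
  exact hconv _ hf0

/-- For `h ∈ B_S`, measurable sets `D_1, …, D_M`, convex weights
`ω_m ∈ (0,1]` with `∑ ω_m = 1`, `μ > 0` and `0 < τ < 2/(1 + 2μ)`, the regularized operator
`T̂_h f = ∑ m, ω_m P_S((1 − μτ) f + τ χ_{D_m}(h − f))` is a Banach contraction on `B_S` with
Lipschitz constant `1 − μτ`; consequently it has a unique fixed point `f̂* ∈ B_S`, and for
every starting point `f_0 ∈ B_S` the iterates `f_{k+1} = T̂_h f_k` converge strongly
to `f̂*`. -/
theorem regularized_contraction_multi (N : ℕ) (hN : 1 ≤ N)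
    (S : Set (EuclideanSpace ℝ (Fin N))) (hS : IsCompact S)
    (K : Submodule ℂ (L2Space N))
    (hKset : (K : Set (L2Space N)) = {f : L2Space N | IsBandlimited S f})
    (hK : IsClosed (K : Set (L2Space N)))
    (h : L2Space N) (hh : IsBandlimited S h)
    (M : ℕ) (D : Fin M → Set (EuclideanSpace ℝ (Fin N))) (hD : ∀ m, MeasurableSet (D m))
    (ω : Fin M → ℝ) (hω : ∀ m, ω m ∈ Set.Ioc (0 : ℝ) 1) (hωsum : ∑ m, ω m = 1)
    (μ τ : ℝ) (hμ : 0 < μ) (hτ0 : 0 < τ) (hτ : τ < 2 / (1 + 2 * μ)) :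
    (∀ f g : L2Space N, IsBandlimited S f → IsBandlimited S g →
        ‖TmultiReg K hK hD ω μ τ h f - TmultiReg K hK hD ω μ τ h g‖ ≤
          (1 - μ * τ) * ‖f - g‖) ∧
      ∃ fstar : L2Space N, IsBandlimited S fstar ∧
        TmultiReg K hK hD ω μ τ h fstar = fstar ∧
        (∀ g : L2Space N, IsBandlimited S g → TmultiReg K hK hD ω μ τ h g = g → g = fstar) ∧
        ∀ f : ℕ → L2Space N, IsBandlimited S (f 0) →
          (∀ k : ℕ, f (k + 1) = TmultiReg K hK hD ω μ τ h (f k)) →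
            Tendsto f atTop (nhds fstar) :=
  regularized_contraction_multi_general N S K hKset hK h M D hD ω hω hωsum μ τ hμ hτ0 hτ
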